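/- Let n ≥ 1, let m(x,y) = x^p y^q ∈ 𝒪_n be an ordered monomial with signed index permutation σ ∈ B_n. Define γ_i = f_{|σ^{-1}(i)|}(σ) and μ_i = (q_i − γ_i)/2 for 1 ≤ i ≤ n. Then γ = (γ_1,…,γ_n) and μ = (μ_1,…,μ_n) are sequences of non-negative integers satisfying: (1) q = 2μ + γ; (2) μ_{|σ(1)|} ≥ μ_{|σ(2)|} ≥ ⋯ ≥ μ_{|σ(n)|}; (3) γ_{|σ(1)|} ≥ γ_{|σ(2)|} ≥ ⋯ ≥ γ_{|σ(n)|}; and (4) if 1 ≤ i < j ≤ n and γ_i = γ_j, then 𝔰(q_i) ≥ 𝔰(q_j). -/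

import Mathlib

open MvPolynomial

/-- The hyperoctahedral group `Bₙ`, realized as the subgroup of permutations of `ℤ`
that commute with negation and fix every integer of absolute value greater than `n`.
Such a permutation restricts to a bijection `σ` of `{-n,…,-1,1,…,n}` with
`σ(-k) = -σ(k)`, and every such bijection arises from a unique element. -/
def HOct (n : ℕ) : Subgroup (Equiv.Perm ℤ) where
  carrier := {σ | (∀ k : ℤ, σ (-k) = -(σ k)) ∧ ∀ k : ℤ, (n : ℤ) < |k| → σ k = k}
  one_mem' := by
    refine ⟨fun k => rfl, fun k _ => rfl⟩
  mul_mem' := by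
    rintro σ τ ⟨hσ1, hσ2⟩ ⟨hτ1, hτ2⟩
    refine ⟨fun k => ?_, fun k hk => ?_⟩
    · simp [Equiv.Perm.mul_apply, hτ1, hσ1]
    · simp [Equiv.Perm.mul_apply, hτ2 k hk, hσ2 k hk]
  inv_mem' := by
    rintro σ ⟨h1, h2⟩
    refine ⟨fun k => ?_, fun k hk => ?_⟩
    · apply σ.injective
      simp [h1]
    · have h := h2 k hk
      nth_rewrite 1 [← h]
      simp

/-- The descent set `Des(σ) = {1 ≤ i ≤ n-1 : σ(i) > σ(i+1)}`. -/
def DesB (n : ℕ) (σ : Equiv.Perm ℤ) : Finset ℕ :=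
  (Finset.Ico 1 n).filter fun i => σ ((i : ℤ) + 1) < σ (i : ℤ)

/-- `d_i(σ) = #{j ∈ Des(σ) : j ≥ i}`. -/
def dB (n : ℕ) (σ : Equiv.Perm ℤ) (i : ℕ) : ℕ :=
  ((DesB n σ).filter fun j => i ≤ j).card

/-- `ε_i(σ)`: `1` if `σ(i) < 0`, `0` otherwise. -/
def epsB (σ : Equiv.Perm ℤ) (i : ℕ) : ℕ := if σ (i : ℤ) < 0 then 1 else 0

/-- `f_i(σ) = 2 d_i(σ) + ε_i(σ)`. -/
def fB (n : ℕ) (σ : Equiv.Perm ℤ) (i : ℕ) : ℕ := 2 * dB n σ i + epsB σ i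

/-- The sign `σ(k)/|σ(k)|` as a rational number. -/
def sgnQ (σ : Equiv.Perm ℤ) (k : ℤ) : ℚ := if σ k < 0 then -1 else 1

/-- For `i : Fin n` (representing the index `i+1 ∈ {1,…,n}`), the element of `Fin n`
representing `|σ(i+1)| ∈ {1,…,n}`. -/
def sIdx {n : ℕ} (σ : Equiv.Perm ℤ) (i : Fin n) : Fin n :=
  ⟨((σ ((i : ℕ) + 1 : ℤ)).natAbs - 1) % n, Nat.mod_lt _ i.pos⟩

/-- The diagonal action of a signed permutation on `ℚ[x₁,…,xₙ,y₁,…,yₙ]`: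
`x_k ↦ (σ(k)/|σ(k)|)·x_{|σ(k)|}` and `y_k ↦ (σ(k)/|σ(k)|)·y_{|σ(k)|}`.
Here `Sum.inl i` is the variable `x_{i+1}` and `Sum.inr i` is `y_{i+1}`. -/
noncomputable def actXY (n : ℕ) (σ : Equiv.Perm ℤ) :
    MvPolynomial (Fin n ⊕ Fin n) ℚ →ₐ[ℚ] MvPolynomial (Fin n ⊕ Fin n) ℚ :=
  aeval (Sum.elim
    (fun i => C (sgnQ σ ((i : ℕ) + 1 : ℤ)) * X (Sum.inl (sIdx σ i)))
    (fun i => C (sgnQ σ ((i : ℕ) + 1 : ℤ)) * X (Sum.inr (sIdx σ i))))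

/-- Action of a signed permutation on the `x`-variables only. -/
noncomputable def actX (n : ℕ) (σ : Equiv.Perm ℤ) :
    MvPolynomial (Fin n ⊕ Fin n) ℚ →ₐ[ℚ] MvPolynomial (Fin n ⊕ Fin n) ℚ :=
  aeval (Sum.elim
    (fun i => C (sgnQ σ ((i : ℕ) + 1 : ℤ)) * X (Sum.inl (sIdx σ i)))
    (fun i => X (Sum.inr i)))

/-- Action of a signed permutation on the `y`-variables only. -/
noncomputable def actY (n : ℕ) (σ : Equiv.Perm ℤ) :
    MvPolynomial (Fin n ⊕ Fin n) ℚ →ₐ[ℚ] MvPolynomial (Fin n ⊕ Fin n) ℚ :=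
  aeval (Sum.elim
    (fun i => X (Sum.inl i))
    (fun i => C (sgnQ σ ((i : ℕ) + 1 : ℤ)) * X (Sum.inr (sIdx σ i))))

/-- The averaging operator `ρ(f) = (1/|Bₙ|) ∑_{σ ∈ Bₙ} σ·f`. -/
noncomputable def rho (n : ℕ) (f : MvPolynomial (Fin n ⊕ Fin n) ℚ) :
    MvPolynomial (Fin n ⊕ Fin n) ℚ :=
  (Nat.card ↥(HOct n) : ℚ)⁻¹ • ∑ᶠ σ : ↥(HOct n), actXY n (σ : Equiv.Perm ℤ) f

/-- The diagonal signed descent monomial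
`c_σ = ∏_{i=1}^n x_i^{f_i(σ⁻¹)} y_i^{f_{|σ⁻¹(i)|}(σ)}`. -/
noncomputable def cMon (n : ℕ) (σ : Equiv.Perm ℤ) : MvPolynomial (Fin n ⊕ Fin n) ℚ :=
  ∏ i : Fin n,
    (X (Sum.inl i) ^ fB n σ⁻¹ ((i : ℕ) + 1) *
      X (Sum.inr i) ^ fB n σ ((σ⁻¹ ((i : ℕ) + 1 : ℤ)).natAbs))

/-- The monomial `x^p y^q`. -/
noncomputable def monXY (n : ℕ) (p q : Fin n → ℕ) : MvPolynomial (Fin n ⊕ Fin n) ℚ :=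
  (∏ i : Fin n, X (Sum.inl i) ^ p i) * ∏ i : Fin n, X (Sum.inr i) ^ q i

/-- The monomial `x^p y^q` is ordered (belongs to `𝒪ₙ`). -/
def OrderedMon (n : ℕ) (p q : Fin n → ℕ) : Prop :=
  (∀ k, Even (p k + q k)) ∧ Antitone p ∧
  (∀ (i : Fin n) (h : (i : ℕ) + 1 < n),
    p i = p ⟨(i : ℕ) + 1, h⟩ → Even (p i) → q ⟨(i : ℕ) + 1, h⟩ ≤ q i) ∧
  (∀ (i : Fin n) (h : (i : ℕ) + 1 < n),
    p i = p ⟨(i : ℕ) + 1, h⟩ → Odd (p i) → q i ≤ q ⟨(i : ℕ) + 1, h⟩)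

/-- `σ` is the signed index permutation of a monomial with `y`-exponent sequence `q`:
(1) `q_{|σ(1)|} ≥ ⋯ ≥ q_{|σ(n)|}`; (2) ties `q_{|σ(i)|} = q_{|σ(j)|}` (`i < j`) force
`σ(i) < σ(i+1) < ⋯ < σ(j)`; (3) `q_{|σ(i)|}` is even iff `σ(i) > 0`. -/
def IsSignedIndexPerm (n : ℕ) (q : Fin n → ℕ) (σ : Equiv.Perm ℤ) : Prop :=
  σ ∈ HOct n ∧
  Antitone (fun i : Fin n => q (sIdx σ i)) ∧
  (∀ i j : Fin n, i < j → q (sIdx σ i) = q (sIdx σ j) →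
    ∀ k l : Fin n, i ≤ k → k < l → l ≤ j →
      σ ((k : ℕ) + 1 : ℤ) < σ ((l : ℕ) + 1 : ℤ)) ∧
  (∀ i : Fin n, Even (q (sIdx σ i)) ↔ 0 < σ ((i : ℕ) + 1 : ℤ))

/-- `𝔰(q) = q` if `q` is even, `-q` if `q` is odd. -/
def sFun (q : ℕ) : ℤ := if Even q then (q : ℤ) else -(q : ℤ)

/-- The decreasing rearrangement `𝔬(q)` of a sequence `q`. -/
def oArr {n : ℕ} (q : Fin n → ℕ) : Fin n → ℕ := fun i => q (Tuple.sort q i.rev)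

/-- Strict lexicographic comparison of sequences. -/
def LexLT {n : ℕ} {α : Type*} [LT α] (a b : Fin n → α) : Prop :=
  ∃ i, (∀ j, j < i → a j = b j) ∧ a i < b i

/-- The monomial `x^{p'} y^{q'}` strictly precedes `x^p y^q` in the total order `≼` on
ordered monomials: either `𝔬(x^{p'}y^{q'}) <_ℓ 𝔬(x^p y^q)` lexicographically, or the
`𝔬`-data agree and `(p', 𝔰(q')) <_ℓ (p, 𝔰(q))` lexicographically. -/
def MonPrec {n : ℕ} (p' q' p q : Fin n → ℕ) : Prop :=
  LexLT (oArr p') (oArr p) ∨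
  (oArr p' = oArr p ∧ LexLT (oArr q') (oArr q)) ∨
  (oArr p' = oArr p ∧ oArr q' = oArr q ∧
    (LexLT p' p ∨ (p' = p ∧ LexLT (fun i => sFun (q' i)) (fun i => sFun (q i)))))

/-- The monomial symmetric polynomial `m_{2ν}(x) = ∑_{[α] ∈ Σₙ/Σₙ(ν)} x^{2α(ν)}`,
i.e. the sum of all distinct monomials `x^{2w}` with `w` a rearrangement of `ν`. -/
noncomputable def mSymX (n : ℕ) (ν : Fin n → ℕ) : MvPolynomial (Fin n ⊕ Fin n) ℚ :=
  ∑ w ∈ Finset.image (fun α : Equiv.Perm (Fin n) => ν ∘ α) Finset.univ,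
    ∏ i : Fin n, X (Sum.inl i) ^ (2 * w i)

/-- The monomial symmetric polynomial `m_{2μ}(y)`. -/
noncomputable def mSymY (n : ℕ) (μ : Fin n → ℕ) : MvPolynomial (Fin n ⊕ Fin n) ℚ :=
  ∑ w ∈ Finset.image (fun α : Equiv.Perm (Fin n) => μ ∘ α) Finset.univ,
    ∏ i : Fin n, X (Sum.inr i) ^ (2 * w i)

/-- The action of a signed permutation on `ℚ[x₁,…,xₙ]`:
`x_k ↦ (σ(k)/|σ(k)|)·x_{|σ(k)|}`. Here the variable `i : Fin n` is `x_{i+1}`. -/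
noncomputable def actB (n : ℕ) (σ : Equiv.Perm ℤ) :
    MvPolynomial (Fin n) ℚ →ₐ[ℚ] MvPolynomial (Fin n) ℚ :=
  aeval fun i => C (sgnQ σ ((i : ℕ) + 1 : ℤ)) * X (sIdx σ i)

/-- The signed descent monomial `b_σ = ∏_{i=1}^n x_i^{f_{|σ⁻¹(i)|}(σ)}`. -/
noncomputable def bMon (n : ℕ) (σ : Equiv.Perm ℤ) : MvPolynomial (Fin n) ℚ :=
  ∏ i : Fin n, X i ^ fB n σ ((σ⁻¹ ((i : ℕ) + 1 : ℤ)).natAbs)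


/-!
Along the positions `t = 1, …, n` write `Q_t = q_{|σ(t)|}` and `F_t = f_t(σ)`. Since
`t ↦ |σ(t)|` is a bijection and `γ_{|σ(t)|} = F_t`, all four claims are statements about
`Q` and `F`. The parity of `Q_t` is `ε_t(σ)`, so `Q_t ≡ F_t (mod 2)`. From one position to the
next, `F` drops by `2·[descent] + ε_t − ε_{t+1} ≥ 0`, while `Q` drops strictly at every descent
(equal values of `Q` occupy increasing runs of `σ`) and by an amount of the right parity; hence
`Q − F` is antitone too. At the last position `F_n = ε_n ≤ Q_n`, so `F ≤ Q` everywhere, which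
makes `μ` well defined. Finally, equal values of `F = 2d + ε` force equal signs and an increasing
run of `σ` between the two positions, which orders `q` as `𝔰` requires.
-/

namespace HOct

variable {n : ℕ} {σ : Equiv.Perm ℤ}

lemma map_zero (h : σ ∈ HOct n) : σ 0 = 0 := by
  have := h.1 0
  rw [neg_zero] at this
  omega

lemma map_ne_zero (h : σ ∈ HOct n) {k : ℤ} (hk : k ≠ 0) : σ k ≠ 0 := by
  rw [← map_zero h]
  exact σ.injective.ne hk

lemma abs_map_le (h : σ ∈ HOct n) {k : ℤ} (hk : |k| ≤ n) : |σ k| ≤ n := by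
  by_contra! hlt
  have hfix := ((HOct n).inv_mem h).2 (σ k) hlt
  rw [Equiv.Perm.coe_inv, Equiv.symm_apply_apply] at hfix
  rw [← hfix] at hlt
  exact hlt.not_ge hk

lemma natAbs_map_natAbs (h : σ ∈ HOct n) (k : ℤ) : (σ k.natAbs).natAbs = (σ k).natAbs := by
  obtain ⟨m, rfl | rfl⟩ := Int.eq_nat_or_neg k <;>
    simp only [Int.natAbs_neg, Int.natAbs_natCast, h.1]

lemma sIdx_val_add_one (h : σ ∈ HOct n) (t : Fin n) :
    (sIdx σ t : ℕ) + 1 = (σ ((t : ℕ) + 1 : ℤ)).natAbs := by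
  have hne := map_ne_zero h (k := (t : ℕ) + 1) (by positivity)
  have hle := abs_map_le h (k := (t : ℕ) + 1) (by rw [abs_of_nonneg (by positivity)]; omega)
  rw [Int.abs_eq_natAbs] at hle
  show ((σ _).natAbs - 1) % n + 1 = _
  rw [Nat.mod_eq_of_lt (by omega)]
  omega

lemma natAbs_inv_sIdx (h : σ ∈ HOct n) (t : Fin n) :
    (σ⁻¹ ((sIdx σ t : ℕ) + 1 : ℤ)).natAbs = (t : ℕ) + 1 := by
  have hval : ((sIdx σ t : ℕ) + 1 : ℤ) = ((σ ((t : ℕ) + 1 : ℤ)).natAbs : ℤ) := by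
    exact_mod_cast sIdx_val_add_one h t
  rw [hval, natAbs_map_natAbs ((HOct n).inv_mem h)]
  rw [Equiv.Perm.coe_inv, Equiv.symm_apply_apply]
  omega

lemma sIdx_inv_sIdx (h : σ ∈ HOct n) : Function.LeftInverse (sIdx σ⁻¹) (sIdx (n := n) σ) :=
  fun t => Fin.ext <| by
    have := sIdx_val_add_one ((HOct n).inv_mem h) (sIdx σ t)
    rw [natAbs_inv_sIdx h] at this
    omega

lemma sIdx_surjective (h : σ ∈ HOct n) : Function.Surjective (sIdx (n := n) σ) := by
  simpa using (sIdx_inv_sIdx ((HOct n).inv_mem h)).surjective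

end HOct

section Descents

variable {n : ℕ} {σ : Equiv.Perm ℤ}

lemma dB_self : dB n σ n = 0 := by
  simp only [dB, DesB, Finset.card_eq_zero, Finset.filter_eq_empty_iff, Finset.mem_filter,
    Finset.mem_Ico]
  omega

lemma dB_antitone : Antitone (dB n σ) := fun _ _ hij =>
  Finset.card_le_card <| Finset.monotone_filter_right _ fun _ _ hj => hij.trans hj

lemma dB_eq_succ_add {i : ℕ} (h1 : 1 ≤ i) (h2 : i < n) :
    dB n σ i = dB n σ (i + 1) + if σ ((i : ℤ) + 1) < σ i then 1 else 0 := by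
  have hsplit : (DesB n σ).filter (fun j => i ≤ j) =
      (DesB n σ).filter (fun j => i + 1 ≤ j ∨ j = i) :=
    Finset.filter_congr fun j _ => by omega
  rw [dB, hsplit, Finset.filter_or,
    Finset.card_union_of_disjoint (Finset.disjoint_filter.2 fun _ _ _ => by omega),
    Finset.filter_eq', dB]
  split_ifs with hmem hd hd <;> simp only [DesB, Finset.mem_filter, Finset.mem_Ico] at hmem <;>
    simp_all

lemma lt_succ_of_dB_eq {i : ℕ} (h1 : 1 ≤ i) (h2 : i < n) (hd : dB n σ i = dB n σ (i + 1)) :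
    σ i < σ ((i : ℤ) + 1) := by
  have hstep := dB_eq_succ_add (σ := σ) h1 h2
  have hne : σ i ≠ σ ((i : ℤ) + 1) := σ.injective.ne (by omega)
  split_ifs at hstep <;> omega

lemma lt_of_dB_eq {a b : ℕ} (ha : 1 ≤ a) (hab : a < b) (hb : b ≤ n)
    (hd : dB n σ a = dB n σ b) : σ a < σ b := by
  induction b, hab using Nat.le_induction with
  | base => exact lt_succ_of_dB_eq ha hb hd
  | succ b hab ih =>
    have hsand : dB n σ (b + 1) ≤ dB n σ b ∧ dB n σ b ≤ dB n σ a :=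
      ⟨dB_antitone b.le_succ, dB_antitone (show a ≤ b by omega)⟩
    have hstep : σ b < σ ((b : ℤ) + 1) :=
      lt_succ_of_dB_eq (n := n) (by omega) (by omega) (by omega)
    push_cast
    exact (ih (by omega) (by omega)).trans hstep

lemma epsB_le_one (σ : Equiv.Perm ℤ) (i : ℕ) : epsB σ i ≤ 1 := by
  unfold epsB
  split_ifs <;> omega

lemma lt_of_fB_eq {a b : ℕ} (ha : 1 ≤ a) (hab : a < b) (hb : b ≤ n)
    (hf : fB n σ a = fB n σ b) : σ a < σ b := by
  have := epsB_le_one σ a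
  have := epsB_le_one σ b
  exact lt_of_dB_eq ha hab hb (by unfold fB at hf; omega)

lemma fB_succ_le {i : ℕ} (h1 : 1 ≤ i) (h2 : i < n) : fB n σ (i + 1) ≤ fB n σ i := by
  have hstep := dB_eq_succ_add (σ := σ) h1 h2
  have hne : σ i ≠ σ ((i : ℤ) + 1) := σ.injective.ne (by omega)
  simp only [fB, epsB] at *
  push_cast
  split_ifs at * <;> omega

end Descents

lemma Fin.antitone_of_succ_le {α : Type*} [Preorder α] {n : ℕ} {f : Fin n → α}
    (h : ∀ (t : Fin n) (ht : (t : ℕ) + 1 < n), f ⟨(t : ℕ) + 1, ht⟩ ≤ f t) : Antitone f := by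
  cases n with
  | zero => exact fun a => a.elim0
  | succ m => exact Fin.antitone_iff_succ_le.2 fun t => h t.castSucc (by simp)

lemma fB_antitone (n : ℕ) (σ : Equiv.Perm ℤ) : Antitone fun t : Fin n => fB n σ ((t : ℕ) + 1) :=
  Fin.antitone_of_succ_le fun t ht => fB_succ_le (i := (t : ℕ) + 1) (by omega) ht

namespace IsSignedIndexPerm

variable {n : ℕ} {q : Fin n → ℕ} {σ : Equiv.Perm ℤ}

lemma epsB_eq_mod_two (hσ : IsSignedIndexPerm n q σ) (t : Fin n) :
    epsB σ ((t : ℕ) + 1) = q (sIdx σ t) % 2 := by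
  have hne := HOct.map_ne_zero hσ.1 (k := (t : ℕ) + 1) (by positivity)
  have hpar := hσ.2.2.2 t
  rw [Nat.even_iff] at hpar
  unfold epsB
  push_cast
  split_ifs <;> omega

lemma fB_mod_two (hσ : IsSignedIndexPerm n q σ) (t : Fin n) :
    fB n σ ((t : ℕ) + 1) % 2 = q (sIdx σ t) % 2 := by
  rw [fB, ← hσ.epsB_eq_mod_two t]
  have := epsB_le_one σ ((t : ℕ) + 1)
  omega

lemma sub_fB_succ_le (hσ : IsSignedIndexPerm n q σ) (t : Fin n) (ht : (t : ℕ) + 1 < n) :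
    (q (sIdx σ ⟨(t : ℕ) + 1, ht⟩) : ℤ) - fB n σ ((t : ℕ) + 1 + 1) ≤
      (q (sIdx σ t) : ℤ) - fB n σ ((t : ℕ) + 1) := by
  set u : Fin n := ⟨(t : ℕ) + 1, ht⟩ with hu
  have htu : t < u := Fin.lt_def.2 (by simp [u])
  have hq : q (sIdx σ u) ≤ q (sIdx σ t) := hσ.2.1 htu.le
  have htie : q (sIdx σ t) = q (sIdx σ u) → σ ((t : ℕ) + 1 : ℤ) < σ ((u : ℕ) + 1 : ℤ) :=
    fun h => hσ.2.2.1 t u htu h t u le_rfl htu le_rfl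
  have hstep := dB_eq_succ_add (σ := σ) (n := n) (i := (t : ℕ) + 1) (by omega) ht
  have hεt := hσ.epsB_eq_mod_two t
  have hεu := hσ.epsB_eq_mod_two u
  simp only [fB, epsB, hu] at *
  push_cast at *
  split_ifs at * <;> omega

lemma sub_fB_antitone (hσ : IsSignedIndexPerm n q σ) :
    Antitone fun t : Fin n => (q (sIdx σ t) : ℤ) - fB n σ ((t : ℕ) + 1) :=
  Fin.antitone_of_succ_le hσ.sub_fB_succ_le

lemma fB_le (hσ : IsSignedIndexPerm n q σ) (t : Fin n) : fB n σ ((t : ℕ) + 1) ≤ q (sIdx σ t) := by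
  have hn := t.isLt
  set last : Fin n := ⟨n - 1, by omega⟩
  have hlast : (last : ℕ) + 1 = n := by simp only [last]; omega
  have hmono := hσ.sub_fB_antitone (show t ≤ last from Fin.le_def.2 (by simp only [last]; omega))
  have hf : fB n σ ((last : ℕ) + 1) = q (sIdx σ last) % 2 := by
    rw [fB, ← hσ.epsB_eq_mod_two last, hlast, dB_self, mul_zero, zero_add]
  have := Nat.mod_le (q (sIdx σ last)) 2
  simp only at hmono
  omega

lemma sFun_le_of_fB_eq (hσ : IsSignedIndexPerm n q σ) {s t : Fin n} (hst : sIdx σ s < sIdx σ t)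
    (hf : fB n σ ((s : ℕ) + 1) = fB n σ ((t : ℕ) + 1)) :
    sFun (q (sIdx σ t)) ≤ sFun (q (sIdx σ s)) := by
  have hlt : ∀ {a b : Fin n}, a < b → fB n σ ((a : ℕ) + 1) = fB n σ ((b : ℕ) + 1) →
      σ ((a : ℕ) + 1 : ℤ) < σ ((b : ℕ) + 1 : ℤ) := fun {a b} hab h => by
    exact_mod_cast lt_of_fB_eq (a := (a : ℕ) + 1) (b := (b : ℕ) + 1) (by omega)
      (by simpa using hab) (by omega) h
  have hεs := hσ.epsB_eq_mod_two s
  have hεt := hσ.epsB_eq_mod_two t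
  have hε : epsB σ ((s : ℕ) + 1) = epsB σ ((t : ℕ) + 1) := by
    have := epsB_le_one σ ((s : ℕ) + 1)
    have := epsB_le_one σ ((t : ℕ) + 1)
    unfold fB at hf
    omega
  have hvs := HOct.sIdx_val_add_one hσ.1 s
  have hvt := HOct.sIdx_val_add_one hσ.1 t
  have hst' : (sIdx σ s : ℕ) < sIdx σ t := hst
  have hns := HOct.map_ne_zero hσ.1 (k := (s : ℕ) + 1) (by positivity)
  have hnt := HOct.map_ne_zero hσ.1 (k := (t : ℕ) + 1) (by positivity)
  have hsFun : ∀ k, sFun k = if k % 2 = 0 then (k : ℤ) else -k := fun k => by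
    simp only [sFun, Nat.even_iff]
  rw [hsFun, hsFun]
  simp only [epsB] at hεs hεt hε
  push_cast at hεs hεt hε
  rcases lt_trichotomy s t with h | rfl | h
  · have := hlt h hf
    have : q (sIdx σ t) ≤ q (sIdx σ s) := hσ.2.1 h.le
    split_ifs at * <;> omega
  · exact absurd hst (lt_irrefl _)
  · have := hlt h hf.symm
    have : q (sIdx σ s) ≤ q (sIdx σ t) := hσ.2.1 h.le
    split_ifs at * <;> omega

end IsSignedIndexPerm

theorem q_decomposition_general (n : ℕ) (q : Fin n → ℕ)
    (σ : Equiv.Perm ℤ) (hσ : IsSignedIndexPerm n q σ)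
    (γ μ : Fin n → ℕ)
    (hγ : ∀ i : Fin n, γ i = fB n σ ((σ⁻¹ ((i : ℕ) + 1 : ℤ)).natAbs))
    (hμ : ∀ i : Fin n, μ i = (q i - γ i) / 2) :
    (∀ i : Fin n, q i = 2 * μ i + γ i) ∧
    Antitone (fun i : Fin n => μ (sIdx σ i)) ∧
    Antitone (fun i : Fin n => γ (sIdx σ i)) ∧
    (∀ i j : Fin n, i < j → γ i = γ j → sFun (q j) ≤ sFun (q i)) := by
  have hsurj := HOct.sIdx_surjective hσ.1
  have hγσ : ∀ t, γ (sIdx σ t) = fB n σ ((t : ℕ) + 1) := fun t => by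
    rw [hγ, HOct.natAbs_inv_sIdx hσ.1]
  have hμσ : ∀ t, μ (sIdx σ t) = (q (sIdx σ t) - fB n σ ((t : ℕ) + 1)) / 2 := fun t => by
    rw [hμ, hγσ]
  refine ⟨hsurj.forall.2 fun t => ?_, fun s t hst => ?_, fun s t hst => ?_, ?_⟩
  · have := hσ.fB_le t
    have := hσ.fB_mod_two t
    rw [hμσ, hγσ]
    omega
  · have := hσ.fB_le s
    have := hσ.fB_le t
    have := hσ.sub_fB_antitone hst
    simp only [hμσ] at *
    omega
  · simpa only [hγσ] using fB_antitone n σ hst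
  · refine hsurj.forall.2 fun s => hsurj.forall.2 fun t hst hf => ?_
    rw [hγσ, hγσ] at hf
    exact hσ.sFun_le_of_fB_eq hst hf

/-- Decomposition `q = 2μ + γ` of the `y`-exponents of an ordered monomial, where
`γ_i = f_{|σ⁻¹(i)|}(σ)` and `μ_i = (q_i - γ_i)/2` for the signed index permutation `σ`:
(1) `q = 2μ + γ`; (2) `μ_{|σ(1)|} ≥ ⋯ ≥ μ_{|σ(n)|}`; (3) `γ_{|σ(1)|} ≥ ⋯ ≥ γ_{|σ(n)|}`;
(4) if `i < j` and `γ_i = γ_j` then `𝔰(q_i) ≥ 𝔰(q_j)`. -/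
theorem q_decomposition (n : ℕ) (hn : 1 ≤ n) (p q : Fin n → ℕ)
    (hO : OrderedMon n p q) (σ : Equiv.Perm ℤ) (hσ : IsSignedIndexPerm n q σ)
    (γ μ : Fin n → ℕ)
    (hγ : ∀ i : Fin n, γ i = fB n σ ((σ⁻¹ ((i : ℕ) + 1 : ℤ)).natAbs))
    (hμ : ∀ i : Fin n, μ i = (q i - γ i) / 2) :
    (∀ i : Fin n, q i = 2 * μ i + γ i) ∧
    Antitone (fun i : Fin n => μ (sIdx σ i)) ∧
    Antitone (fun i : Fin n => γ (sIdx σ i)) ∧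
    (∀ i j : Fin n, i < j → γ i = γ j → sFun (q j) ≤ sFun (q i)) :=
  q_decomposition_general n q σ hσ γ μ hγ hμ
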